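/- Let r : ℝ → ℝ be bounded, continuously differentiable, strictly increasing, and satisfy s·r(s) ≥ 0 for all s ∈ ℝ, and let κ > 0. Then for every c₀ ≥ 0 there exists a unique twice continuously differentiable function c : [0,∞) → ℝ with κ·c''(z) = r(c(z)) for all z ≥ 0, c(0) = c₀ and c'(0) = 0. Moreover c and c' are nondecreasing on [0,∞) (in particular c(z) ≥ c₀ ≥ 0 and c'(z) ≥ 0 for all z ≥ 0), and for c₀ = 0 the solution is identically zero. -/

import Mathlib

open Set MeasureTheory intervalIntegral Filter

/-- `c` (with derivative `c'` and second derivative `c''`) solves the initial value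
problem `κ·c'' = r(c)` on `[0,∞)` with `c(0) = c₀`, `c'(0) = 0`. -/
def SolvesIVP (κ : ℝ) (r : ℝ → ℝ) (c₀ : ℝ) (c c' c'' : ℝ → ℝ) : Prop :=
  (∀ z ∈ Ici (0:ℝ), HasDerivWithinAt c (c' z) (Ici (0:ℝ)) z) ∧
  (∀ z ∈ Ici (0:ℝ), HasDerivWithinAt c' (c'' z) (Ici (0:ℝ)) z) ∧
  ContinuousOn c'' (Ici (0:ℝ)) ∧
  (∀ z ∈ Ici (0:ℝ), κ * c'' z = r (c z)) ∧
  c 0 = c₀ ∧ c' 0 = 0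

/-!
With `y = (c, c')` the equation `κ c'' = r c` becomes a first-order system whose field is locally
Lipschitz, so solutions are unique by Grönwall. Since `r` is bounded, Picard–Lindelöf applied to
`(c, T c')` yields a solution on every `[0, T]`, and uniqueness glues these into one on `[0, ∞)`.

For `c₀ > 0` the set where `c ≥ c₀` and `c' ≥ 0` is closed and contains a right neighbourhood
of each of its points, because there `κ c'' = r c > 0`; by continuous induction it is all of
`[0, ∞)`, and then `c'' ≥ 0` makes `c'` nondecreasing as well. For `c₀ = 0` the sign condition
forces `r 0 = 0`, so the zero function is the solution.
-/

open Metric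
open scoped NNReal Topology

theorem ContinuousAt.map_zero_of_forall_mul_nonneg {f : ℝ → ℝ} (hf : ContinuousAt f 0)
    (h : ∀ s, 0 ≤ s * f s) : f 0 = 0 := by
  have hle : f 0 ≤ 0 :=
    le_of_tendsto (hf.mono_left nhdsWithin_le_nhds : Tendsto f (𝓝[<] 0) _)
      (eventually_mem_nhdsWithin.mono fun s hs => nonpos_of_mul_nonneg_right (h s) hs)
  have hge : 0 ≤ f 0 :=
    ge_of_tendsto (hf.mono_left nhdsWithin_le_nhds : Tendsto f (𝓝[>] 0) _)
      (eventually_mem_nhdsWithin.mono fun s hs => nonneg_of_mul_nonneg_right (h s) hs)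
  exact le_antisymm hle hge

theorem monotoneOn_of_hasDerivWithinAt_nonneg_of_subset {f f' : ℝ → ℝ} {s D : Set ℝ}
    (hD : Convex ℝ D) (hDs : D ⊆ s) (hf : ∀ x ∈ s, HasDerivWithinAt f (f' x) s x)
    (hf' : ∀ x ∈ D, 0 ≤ f' x) : MonotoneOn f D :=
  monotoneOn_of_hasDerivWithinAt_nonneg hD
    (fun x hx => (hf x (hDs hx)).continuousWithinAt.mono hDs)
    (fun x hx => (hf x (hDs (interior_subset hx))).mono (interior_subset.trans hDs))
    (fun x hx => hf' x (interior_subset hx))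

section IntegralCurve

variable {E : Type*} [NormedAddCommGroup E] [NormedSpace ℝ E] {v : E → E}

theorem IsIntegralCurveOn.eqOn_Icc_of_locallyLipschitz (hv : LocallyLipschitz v)
    {u w : ℝ → E} {a b : ℝ} (hu : IsIntegralCurveOn u (fun _ => v) (Icc a b))
    (hw : IsIntegralCurveOn w (fun _ => v) (Icc a b)) (h : u a = w a) :
    EqOn u w (Icc a b) := by
  obtain ⟨K, hK⟩ := hv.locallyLipschitzOn.exists_lipschitzOnWith_of_compact
    ((isCompact_Icc.image_of_continuousOn hu.continuousOn).union
      (isCompact_Icc.image_of_continuousOn hw.continuousOn))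
  have hIci : ∀ γ : ℝ → E, IsIntegralCurveOn γ (fun _ => v) (Icc a b) →
      ∀ t ∈ Ico a b, HasDerivWithinAt γ (v (γ t)) (Ici t) t := fun γ hγ t ht =>
    (hγ t (Ico_subset_Icc_self ht)).mono_of_mem_nhdsWithin (Icc_mem_nhdsGE_of_mem ht)
  exact ODE_solution_unique_of_mem_Icc_right (fun _ _ => hK)
    hu.continuousOn (hIci u hu) (fun t ht => .inl (mem_image_of_mem u (Ico_subset_Icc_self ht)))
    hw.continuousOn (hIci w hw) (fun t ht => .inr (mem_image_of_mem w (Ico_subset_Icc_self ht)))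
    h

theorem exists_isIntegralCurveOn_Ici_of_forall_Icc (hv : LocallyLipschitz v) {x₀ : E}
    (hex : ∀ T > 0, ∃ u : ℝ → E, u 0 = x₀ ∧
      IsIntegralCurveOn u (fun _ => v) (Icc 0 T)) :
    ∃ u : ℝ → E, u 0 = x₀ ∧ IsIntegralCurveOn u (fun _ => v) (Ici 0) := by
  choose sol hsol₀ hsol using hex
  have hagree : ∀ T (hT : 0 < T), ∀ z ∈ Icc 0 T,
      sol (|z| + 1) (by positivity) z = sol T hT z := fun T hT z hz =>
    ((hsol _ _).mono (Icc_subset_Icc_right (min_le_left _ T))).eqOn_Icc_of_locallyLipschitz hv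
      ((hsol T hT).mono (Icc_subset_Icc_right (min_le_right _ _))) (by rw [hsol₀, hsol₀])
      ⟨hz.1, le_min (by linarith [le_abs_self z]) hz.2⟩
  refine ⟨fun z => sol (|z| + 1) (by positivity) z, hsol₀ _ _, fun z hz => ?_⟩
  have hT : 0 < z + 1 := by linarith [mem_Ici.1 hz]
  have hz' : z ∈ Icc 0 (z + 1) := ⟨hz, by linarith⟩
  have hnhds : Icc 0 (z + 1) ∈ 𝓝[Ici 0] z := by
    rw [← Ici_inter_Iic]
    exact inter_mem_nhdsWithin _ (Iic_mem_nhds (lt_add_one z))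
  have hderiv := (hsol (z + 1) hT z hz').mono_of_mem_nhdsWithin hnhds
  rw [← hagree _ hT z hz'] at hderiv
  exact hderiv.congr_of_eventuallyEq
    (mem_of_superset hnhds fun y hy => hagree _ hT y hy) (hagree _ hT z hz')

end IntegralCurve

def secondOrderField (g : ℝ → ℝ) (y : ℝ × ℝ) : ℝ × ℝ := (y.2, g y.1)

theorem LocallyLipschitz.secondOrderField {g : ℝ → ℝ} (hg : LocallyLipschitz g) :
    LocallyLipschitz (secondOrderField g) :=
  LipschitzWith.prod_snd.locallyLipschitz.prodMk (hg.comp LipschitzWith.prod_fst.locallyLipschitz)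

theorem LocallyLipschitz.div_const {g : ℝ → ℝ} (hg : LocallyLipschitz g) (κ : ℝ) :
    LocallyLipschitz fun s => g s / κ := by
  simpa only [Function.comp_def, smul_eq_mul, inv_mul_eq_div] using
    (lipschitzWith_smul κ⁻¹).locallyLipschitz.comp hg

/-- In the variables `(c, T c')` the field is bounded by `T M` on the ball of radius `T² M`
around the initial point, which lets Picard–Lindelöf reach time `T`. -/
theorem exists_isIntegralCurveOn_secondOrderField_Icc {g : ℝ → ℝ} {M : ℝ}
    (hg : LocallyLipschitz g) (hgM : ∀ s, |g s| ≤ M) (x₀ : ℝ) {T : ℝ} (hT : 0 < T) :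
    ∃ u : ℝ → ℝ × ℝ, u 0 = (x₀, 0) ∧
      IsIntegralCurveOn u (fun _ => secondOrderField g) (Icc 0 T) := by
  lift M to ℝ≥0 using (abs_nonneg _).trans (hgM 0)
  lift T to ℝ≥0 using hT.le
  have hT' : (T : ℝ) ≠ 0 := hT.ne'
  set F : ℝ × ℝ → ℝ × ℝ := fun y => ((T : ℝ)⁻¹ * y.2, T * g y.1) with hF_def
  have hF : LocallyLipschitz F :=
    ((lipschitzWith_smul (T : ℝ)⁻¹).comp LipschitzWith.prod_snd).locallyLipschitz.prodMk
      ((lipschitzWith_smul (T : ℝ)).locallyLipschitz.comp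
        (hg.comp LipschitzWith.prod_fst.locallyLipschitz))
  obtain ⟨K, hK⟩ := hF.locallyLipschitzOn.exists_lipschitzOnWith_of_compact
    (isCompact_closedBall ((x₀, 0) : ℝ × ℝ) ((T ^ 2 * M : ℝ≥0) : ℝ))
  have hbound : ∀ y ∈ closedBall ((x₀, 0) : ℝ × ℝ) ((T ^ 2 * M : ℝ≥0) : ℝ),
      ‖F y‖ ≤ ((T * M : ℝ≥0) : ℝ) := by
    intro y hy
    have hy₂ : |y.2| ≤ T ^ 2 * M := by
      simpa using (norm_snd_le (y - (x₀, 0))).trans (mem_closedBall_iff_norm.1 hy)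
    rw [Prod.norm_def]
    refine max_le ?_ ?_
    · calc ‖(T : ℝ)⁻¹ * y.2‖ = (T : ℝ)⁻¹ * |y.2| := by simp
        _ ≤ (T : ℝ)⁻¹ * (T ^ 2 * M) := by gcongr
        _ = ((T * M : ℝ≥0) : ℝ) := by push_cast; field_simp
    · calc ‖(T : ℝ) * g y.1‖ = T * |g y.1| := by simp
        _ ≤ T * M := by gcongr; exact hgM _
        _ = ((T * M : ℝ≥0) : ℝ) := by push_cast; ring
  have hPL : IsPicardLindelof (fun _ => F) (⟨0, left_mem_Icc.2 hT.le⟩ : Icc (0 : ℝ) T)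
      (x₀, 0) (T ^ 2 * M) 0 (T * M) K :=
    .of_time_independent hbound hK (by simp [sq, mul_right_comm])
  obtain ⟨w, hw₀, hw⟩ := hPL.exists_eq_forall_mem_Icc_hasDerivWithinAt₀
  refine ⟨fun t => ((w t).1, (T : ℝ)⁻¹ * (w t).2), by simp [hw₀], fun t ht => ?_⟩
  have hwt := hw t ht
  refine ((hasFDerivAt_fst.comp_hasDerivWithinAt t hwt).prodMk
    ((hasFDerivAt_snd.comp_hasDerivWithinAt t hwt).const_mul (T : ℝ)⁻¹)).congr_deriv ?_
  simp [hF_def, secondOrderField, hT']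

section SolvesIVP

variable {κ : ℝ} {r : ℝ → ℝ} {c₀ : ℝ} {c c' c'' : ℝ → ℝ}

theorem SolvesIVP.isIntegralCurveOn (hκ : κ ≠ 0) (hsol : SolvesIVP κ r c₀ c c' c'') :
    IsIntegralCurveOn (fun t => (c t, c' t)) (fun _ => secondOrderField fun s => r s / κ)
      (Ici 0) := fun t ht =>
  ((hsol.1 t ht).prodMk (hsol.2.1 t ht)).congr_deriv <| by
    simp only [secondOrderField]
    rw [← hsol.2.2.2.1 t ht, mul_div_cancel_left₀ _ hκ]

theorem solvesIVP_of_isIntegralCurveOn (hκ : κ ≠ 0) (hr : Continuous r) {u : ℝ → ℝ × ℝ}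
    (hu : IsIntegralCurveOn u (fun _ => secondOrderField fun s => r s / κ) (Ici 0))
    (hu₀ : u 0 = (c₀, 0)) :
    SolvesIVP κ r c₀ (fun t => (u t).1) (fun t => (u t).2) (fun t => r (u t).1 / κ) :=
  ⟨fun t ht => (ContinuousLinearMap.fst ℝ ℝ ℝ).hasFDerivAt.comp_hasDerivWithinAt t
      (hu t ht),
    fun t ht => (ContinuousLinearMap.snd ℝ ℝ ℝ).hasFDerivAt.comp_hasDerivWithinAt t
      (hu t ht),
    ((hr.comp continuous_fst).comp_continuousOn hu.continuousOn).div_const κ,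
    fun _ _ => mul_div_cancel₀ _ hκ, by simp [hu₀], by simp [hu₀]⟩

theorem exists_solvesIVP (hκ : κ ≠ 0) (hrb : ∃ B, ∀ s, |r s| ≤ B)
    (hr : LocallyLipschitz r) (c₀ : ℝ) : ∃ c c' c'' : ℝ → ℝ, SolvesIVP κ r c₀ c c' c'' := by
  obtain ⟨B, hB⟩ := hrb
  have hg := hr.div_const κ
  have hgB : ∀ s, |r s / κ| ≤ B / |κ| := fun s => by
    rw [abs_div]
    exact div_le_div_of_nonneg_right (hB s) (abs_nonneg κ)
  obtain ⟨u, hu₀, hu⟩ := exists_isIntegralCurveOn_Ici_of_forall_Icc hg.secondOrderField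
    fun T hT => exists_isIntegralCurveOn_secondOrderField_Icc hg hgB c₀ hT
  exact ⟨_, _, _, solvesIVP_of_isIntegralCurveOn hκ hr.continuous hu hu₀⟩

theorem SolvesIVP.eqOn (hκ : κ ≠ 0) (hr : LocallyLipschitz r) {c₂ c₂' c₂'' : ℝ → ℝ}
    (h₁ : SolvesIVP κ r c₀ c c' c'') (h₂ : SolvesIVP κ r c₀ c₂ c₂' c₂'') :
    EqOn c c₂ (Ici 0) ∧ EqOn c' c₂' (Ici 0) := by
  have hpair : EqOn (fun t => (c t, c' t)) (fun t => (c₂ t, c₂' t)) (Ici 0) := fun z hz =>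
    ((h₁.isIntegralCurveOn hκ).mono Icc_subset_Ici_self).eqOn_Icc_of_locallyLipschitz
      (hr.div_const κ).secondOrderField ((h₂.isIntegralCurveOn hκ).mono Icc_subset_Ici_self)
      (by rw [h₁.2.2.2.2.1, h₁.2.2.2.2.2, h₂.2.2.2.2.1, h₂.2.2.2.2.2]) ⟨hz, le_rfl⟩
  exact ⟨fun z hz => congrArg Prod.fst (hpair hz), fun z hz => congrArg Prod.snd (hpair hz)⟩

theorem solvesIVP_zero (hr₀ : r 0 = 0) : SolvesIVP κ r 0 0 0 0 :=
  ⟨fun _ _ => hasDerivWithinAt_const _ _ _, fun _ _ => hasDerivWithinAt_const _ _ _,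
    continuousOn_const, fun _ _ => by simp [hr₀], rfl, rfl⟩

theorem SolvesIVP.monotoneOn (hsol : SolvesIVP κ r c₀ c c' c'')
    (hc' : ∀ z ∈ Ici 0, 0 ≤ c' z) : MonotoneOn c (Ici 0) :=
  monotoneOn_of_hasDerivWithinAt_nonneg_of_subset (convex_Ici 0) subset_rfl hsol.1 hc'

theorem SolvesIVP.monotoneOn_deriv (hsol : SolvesIVP κ r c₀ c c' c'') (hκ : 0 < κ)
    (hr : Monotone r) (hr₀ : r 0 = 0) (hc : ∀ z ∈ Ici 0, 0 ≤ c z) : MonotoneOn c' (Ici 0) :=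
  monotoneOn_of_hasDerivWithinAt_nonneg_of_subset (convex_Ici 0) subset_rfl hsol.2.1 fun z hz =>
    nonneg_of_mul_nonneg_right (hsol.2.2.2.1 z hz ▸ hr₀ ▸ hr (hc z hz)) hκ

theorem SolvesIVP.le_and_deriv_nonneg (hsol : SolvesIVP κ r c₀ c c' c'') (hκ : 0 < κ)
    (hr : StrictMono r) (hr₀ : r 0 = 0) (hc₀ : 0 < c₀) :
    ∀ z ∈ Ici 0, c₀ ≤ c z ∧ 0 ≤ c' z := by
  obtain ⟨hc, hc', hc'', heq, h₀, h₀'⟩ := hsol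
  intro z hz
  refine IsClosed.Icc_subset_of_forall_mem_nhdsWithin (a := 0) (b := z)
    (s := (fun x => (c x, c' x)) ⁻¹' (Ici c₀ ×ˢ Ici 0)) ?_ ?_ ?_ ⟨hz, le_rfl⟩
  · have hcont : ContinuousOn (fun x => (c x, c' x)) (Icc 0 z) := fun x hx =>
      ((hc x hx.1).continuousWithinAt.prodMk (hc' x hx.1).continuousWithinAt).mono
        Icc_subset_Ici_self
    rw [inter_comm]
    exact hcont.preimage_isClosed_of_isClosed isClosed_Icc (isClosed_Ici.prod isClosed_Ici)
  · exact ⟨h₀.ge, h₀'.ge⟩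
  · rintro x ⟨⟨hcx, hc'x⟩, hx, -⟩
    have hpos : 0 < c'' x :=
      pos_of_mul_pos_right (heq x hx ▸ hr₀ ▸ hr (hc₀.trans_le hcx)) hκ.le
    obtain ⟨y, hxy, hsub⟩ := mem_nhdsGE_iff_exists_Icc_subset.1
      (((hc'' x hx).mono (Ici_subset_Ici.2 hx)).eventually (lt_mem_nhds hpos))
    have hD : Icc x y ⊆ Ici 0 := fun t ht => hx.trans ht.1
    have hmono' : MonotoneOn c' (Icc x y) :=
      monotoneOn_of_hasDerivWithinAt_nonneg_of_subset (convex_Icc x y) hD hc' fun t ht =>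
        (hsub ht).le
    have hmono : MonotoneOn c (Icc x y) :=
      monotoneOn_of_hasDerivWithinAt_nonneg_of_subset (convex_Icc x y) hD hc fun t ht =>
        hc'x.trans (hmono' (left_mem_Icc.2 hxy.le) ht ht.1)
    filter_upwards [Icc_mem_nhdsGT hxy] with t ht
    exact ⟨hcx.trans (hmono (left_mem_Icc.2 hxy.le) ht ht.1),
      hc'x.trans (hmono' (left_mem_Icc.2 hxy.le) ht ht.1)⟩

end SolvesIVP

theorem IVP_existence_uniqueness_monotone
    (κ : ℝ) (hκ : 0 < κ)
    (r : ℝ → ℝ) (hrb : ∃ B : ℝ, ∀ s : ℝ, |r s| ≤ B)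
    (hr : ContDiff ℝ 1 r) (hrmono : StrictMono r)
    (hrsign : ∀ s : ℝ, 0 ≤ s * r s)
    (c₀ : ℝ) (hc₀ : 0 ≤ c₀) :
    (∃ c c' c'' : ℝ → ℝ, SolvesIVP κ r c₀ c c' c'' ∧
      MonotoneOn c (Ici (0:ℝ)) ∧ MonotoneOn c' (Ici (0:ℝ)) ∧
      (∀ z ∈ Ici (0:ℝ), c₀ ≤ c z ∧ 0 ≤ c' z) ∧
      (c₀ = 0 → ∀ z ∈ Ici (0:ℝ), c z = 0)) ∧
    (∀ c₁ c₁' c₁'' c₂ c₂' c₂'' : ℝ → ℝ,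
      SolvesIVP κ r c₀ c₁ c₁' c₁'' → SolvesIVP κ r c₀ c₂ c₂' c₂'' →
      EqOn c₁ c₂ (Ici (0:ℝ))) := by
  have hr₀ : r 0 = 0 := hr.continuous.continuousAt.map_zero_of_forall_mul_nonneg hrsign
  obtain ⟨c, c', c'', hsol⟩ := exists_solvesIVP hκ.ne' hrb hr.locallyLipschitz c₀
  have hzero (h : c₀ = 0) : EqOn c 0 (Ici 0) ∧ EqOn c' 0 (Ici 0) := by
    subst h
    exact hsol.eqOn hκ.ne' hr.locallyLipschitz (solvesIVP_zero hr₀)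
  have hbounds : ∀ z ∈ Ici 0, c₀ ≤ c z ∧ 0 ≤ c' z := by
    rcases hc₀.eq_or_lt with rfl | hpos
    · exact fun z hz => ⟨((hzero rfl).1 hz).ge, ((hzero rfl).2 hz).ge⟩
    · exact hsol.le_and_deriv_nonneg hκ hrmono hr₀ hpos
  refine ⟨⟨c, c', c'', hsol, hsol.monotoneOn fun z hz => (hbounds z hz).2,
    hsol.monotoneOn_deriv hκ hrmono.monotone hr₀ fun z hz => hc₀.trans (hbounds z hz).1,
    hbounds, fun h => (hzero h).1⟩,
    fun _ _ _ _ _ _ h₁ h₂ => (h₁.eqOn hκ.ne' hr.locallyLipschitz h₂).1⟩
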